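/- arXiv:2501.01445 — 7 statements merged into one kernel-verified Lean document; each statement's English description precedes it below -/
import Mathlib

section
/- Let 0 < σ ≤ 1/2. There exists a constant C > 0 (depending only on σ) such that for every complex number z with 0 < |z| ≤ 1, one has |1 − |z|^{2σ−2} z²| ≤ C·|1 − z|^{2σ}. -/
lemma aux_one_sub_rpow {r p : ℝ} (hr0 : 0 < r) (hr1 : r ≤ 1) (hp0 : 0 < p) (hp1 : p ≤ 1) :
    1 - r ^ p ≤ (1 - r) ^ p := by
  rcases eq_or_lt_of_le hr1 with h | h
  · simp [h, Real.zero_rpow hp0.ne']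
  · have h1 : r ^ (1:ℝ) ≤ r ^ p := Real.rpow_le_rpow_of_exponent_ge hr0 hr1 hp1
    have h2 : (1 - r) ^ (1:ℝ) ≤ (1 - r) ^ p :=
      Real.rpow_le_rpow_of_exponent_ge (by linarith) (by linarith) hp1
    rw [Real.rpow_one] at h1 h2
    linarith

lemma aux_le_two_rpow {a p : ℝ} (ha0 : 0 ≤ a) (ha2 : a ≤ 2) (hp0 : 0 < p) (hp1 : p ≤ 1) :
    a ≤ 2 * a ^ p := by
  rcases eq_or_lt_of_le ha0 with h | h
  · simp [← h, Real.zero_rpow hp0.ne']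
  · have e : a = a ^ p * a ^ (1 - p) := by
      rw [← Real.rpow_add h]; ring_nf; rw [Real.rpow_one]
    have h1 : a ^ (1 - p) ≤ 2 ^ (1 - p) :=
      Real.rpow_le_rpow ha0 ha2 (by linarith)
    have h2 : (2:ℝ) ^ (1 - p) ≤ 2 ^ (1:ℝ) :=
      Real.rpow_le_rpow_of_exponent_le one_le_two (by linarith)
    rw [Real.rpow_one] at h2
    have hap : 0 ≤ a ^ p := Real.rpow_nonneg ha0 _
    calc a = a ^ p * a ^ (1 - p) := e
      _ ≤ a ^ p * 2 := by nlinarith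
      _ = 2 * a ^ p := by ring

/-- Eq. (3.16) of the paper: the reduced inequality
`|1 − |z|^{2σ−2} z²| ≤ C |1 − z|^{2σ}` for `0 < |z| ≤ 1`. -/
theorem stmt_2 (σ : ℝ) (hσ0 : 0 < σ) (hσ : σ ≤ 1 / 2) :
    ∃ C > 0, ∀ z : ℂ, 0 < ‖z‖ → ‖z‖ ≤ 1 →
      ‖1 - ((‖z‖ ^ (2 * σ - 2) : ℝ) : ℂ) * z ^ 2‖
        ≤ C * ‖1 - z‖ ^ (2 * σ) := by
  refine ⟨9, by norm_num, ?_⟩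
  intro z hz0 hz1
  set r : ℝ := ‖z‖ with hr
  set a : ℝ := ‖1 - z‖ with ha
  have hp0 : (0:ℝ) < 2 * σ := by linarith
  have hp1 : 2 * σ ≤ 1 := by linarith
  have ha0 : 0 ≤ a := norm_nonneg _
  have h1r : 1 - r ≤ a := by
    have := norm_sub_norm_le (1:ℂ) z
    simpa using this
  have ha2 : a ≤ 2 := by
    calc a ≤ ‖(1:ℂ)‖ + ‖z‖ := norm_sub_le _ _
      _ ≤ 2 := by rw [norm_one]; linarith
  have hc : r ^ (2 * σ - 2) * r ^ 2 = r ^ (2 * σ) := by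
    rw [← Real.rpow_natCast r 2, ← Real.rpow_add hz0]
    norm_num
  have hrp1 : r ^ (2 * σ) ≤ 1 := Real.rpow_le_one hz0.le hz1 hp0.le
  have hcn : 0 ≤ r ^ (2 * σ - 2) := Real.rpow_nonneg hz0.le _
  -- bound |r - z| ≤ 2 r a
  have hrz : ‖(r:ℂ) - z‖ ≤ 2 * r * a := by
    have e : (r:ℂ) - z = (r:ℂ) * (1 - z) - ((1 - r : ℝ):ℂ) * z := by push_cast; ring
    calc ‖(r:ℂ) - z‖
        ≤ ‖(r:ℂ) * (1 - z)‖ + ‖((1 - r : ℝ):ℂ) * z‖ := by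
          rw [e]; exact norm_sub_le _ _
      _ = r * a + |1 - r| * r := by
          rw [norm_mul, norm_mul, Complex.norm_real, Complex.norm_real, Real.norm_eq_abs,
            Real.norm_eq_abs, abs_of_nonneg hz0.le]
      _ ≤ r * a + a * r := by
          have : |1 - r| = 1 - r := abs_of_nonneg (by linarith)
          rw [this]
          nlinarith
      _ = 2 * r * a := by ring
  have hrz2 : ‖(r:ℂ) + z‖ ≤ 2 * r := by
    calc ‖(r:ℂ) + z‖ ≤ ‖(r:ℂ)‖ + ‖z‖ :=
          norm_add_le _ _
      _ = 2 * r := by rw [Complex.norm_real, Real.norm_eq_abs, abs_of_nonneg hz0.le]; ring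
  have hsq : ‖(r:ℂ) ^ 2 - z ^ 2‖ ≤ 4 * r ^ 2 * a := by
    rw [show (r:ℂ) ^ 2 - z ^ 2 = ((r:ℂ) - z) * ((r:ℂ) + z) by ring, norm_mul]
    calc ‖(r:ℂ) - z‖ * ‖(r:ℂ) + z‖
        ≤ (2 * r * a) * (2 * r) := by
          apply mul_le_mul hrz hrz2 (norm_nonneg _)
          positivity
      _ = 4 * r ^ 2 * a := by ring
  have hdecomp : (1:ℂ) - ((r ^ (2 * σ - 2) : ℝ):ℂ) * z ^ 2
      = ((1 - r ^ (2 * σ) : ℝ):ℂ) + ((r ^ (2 * σ - 2) : ℝ):ℂ) * ((r:ℂ) ^ 2 - z ^ 2) := by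
    rw [← hc]; push_cast; ring
  calc ‖1 - ((r ^ (2 * σ - 2) : ℝ):ℂ) * z ^ 2‖
      ≤ ‖((1 - r ^ (2 * σ) : ℝ):ℂ)‖
        + ‖((r ^ (2 * σ - 2) : ℝ):ℂ) * ((r:ℂ) ^ 2 - z ^ 2)‖ := by
        rw [hdecomp]; exact norm_add_le _ _
    _ = (1 - r ^ (2 * σ)) + r ^ (2 * σ - 2) * ‖(r:ℂ) ^ 2 - z ^ 2‖ := by
        rw [norm_mul, Complex.norm_real, Complex.norm_real, Real.norm_eq_abs, Real.norm_eq_abs,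
          abs_of_nonneg (by linarith), abs_of_nonneg hcn]
    _ ≤ (1 - r ^ (2 * σ)) + r ^ (2 * σ - 2) * (4 * r ^ 2 * a) := by
        have := mul_le_mul_of_nonneg_left hsq hcn
        linarith
    _ = (1 - r ^ (2 * σ)) + 4 * (r ^ (2 * σ)) * a := by
        rw [← hc]; ring
    _ ≤ (1 - r) ^ (2 * σ) + 4 * a := by
        have h1 := aux_one_sub_rpow hz0 hz1 hp0 hp1
        have h2 : 4 * (r ^ (2 * σ)) * a ≤ 4 * a := by nlinarith [Real.rpow_nonneg hz0.le (2*σ)]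
        linarith
    _ ≤ a ^ (2 * σ) + 4 * (2 * a ^ (2 * σ)) := by
        have h1 : (1 - r) ^ (2 * σ) ≤ a ^ (2 * σ) :=
          Real.rpow_le_rpow (by linarith) h1r hp0.le
        have h2 := aux_le_two_rpow ha0 ha2 hp0 hp1
        linarith
    _ = 9 * a ^ (2 * σ) := by ring
end

section
/- Let 0 < σ ≤ 1/2. There exists a constant C > 0 (depending only on σ) such that for all r ∈ (0, 1] and all θ ∈ [−π, π], one has |1 − r^{2σ} e^{2iθ}| ≤ C·|1 − r e^{iθ}|^{2σ}. -/
/-- Eq. (3.18) of the paper: polar form of the reduced Hölder inequality,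
`|1 − r^{2σ} e^{2iθ}| ≤ C |1 − r e^{iθ}|^{2σ}` for `0 < r ≤ 1`, `−π ≤ θ ≤ π`. -/
theorem stmt_3 (σ : ℝ) (hσ0 : 0 < σ) (hσ : σ ≤ 1 / 2) :
    ∃ C > 0, ∀ r θ : ℝ, 0 < r → r ≤ 1 → -Real.pi ≤ θ → θ ≤ Real.pi →
      ‖1 - ((r ^ (2 * σ) : ℝ) : ℂ) * Complex.exp (((2 * θ : ℝ) : ℂ) * Complex.I)‖
        ≤ C * ‖1 - (r : ℂ) * Complex.exp ((θ : ℂ) * Complex.I)‖ ^ (2 * σ) := by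
  refine ⟨9, by norm_num, fun r θ hr hr1 _ _ => ?_⟩
  set t := 2 * σ with ht
  have ht0 : 0 < t := by positivity
  have ht1 : t ≤ 1 := by simp [ht]; linarith
  set e : ℂ := Complex.exp ((θ : ℂ) * Complex.I) with he
  have heabs : ‖e‖ = 1 := Complex.norm_exp_ofReal_mul_I θ
  set z : ℂ := (r : ℂ) * e with hz
  have hzabs : ‖z‖ = r := by
    rw [hz, norm_mul, heabs, Complex.norm_real, Real.norm_eq_abs, abs_of_pos hr, mul_one]
  set a := ‖1 - z‖ with ha
  have ha0 : 0 ≤ a := norm_nonneg _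
  have ha2 : a ≤ 2 := by
    have := norm_sub_le (1 : ℂ) z
    rw [← ha, norm_one, hzabs] at this
    linarith
  have haL : 1 - r ≤ a := by
    have := norm_sub_norm_le (1 : ℂ) z
    rw [← ha, norm_one, hzabs] at this
    linarith
  -- r^t ≤ 1
  have hrt1 : r ^ t ≤ 1 := Real.rpow_le_one (le_of_lt hr) hr1 (le_of_lt ht0)
  have hrt0 : 0 ≤ r ^ t := Real.rpow_nonneg hr.le t
  -- 1 - r^t ≤ a^t
  have key1 : 1 - r ^ t ≤ a ^ t := by
    have h1 : r ≤ r ^ t := by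
      calc r = r ^ (1:ℝ) := (Real.rpow_one r).symm
      _ ≤ r ^ t := Real.rpow_le_rpow_of_exponent_ge hr hr1 ht1
    have h2 : 1 - r ≤ (1 - r) ^ t := by
      rcases eq_or_lt_of_le hr1 with h | h
      · simp [← h, Real.zero_rpow (ne_of_gt ht0)]
      · calc 1 - r = (1 - r) ^ (1:ℝ) := (Real.rpow_one _).symm
        _ ≤ (1 - r) ^ t := Real.rpow_le_rpow_of_exponent_ge (by linarith) (by linarith) ht1
    have h3 : (1 - r) ^ t ≤ a ^ t := Real.rpow_le_rpow (by linarith) haL ht0.le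
    linarith
  -- a ≤ 2 * a^t  (since a ≤ 2, 2^{1-t} ≤ 2)
  have key2 : a ≤ 2 * a ^ t := by
    rcases eq_or_lt_of_le ha0 with h | h
    · simp [← h, Real.zero_rpow (ne_of_gt ht0)]
    · have : a = a ^ t * a ^ (1 - t) := by
        rw [← Real.rpow_add h, add_sub_cancel, Real.rpow_one]
      have h4 : a ^ (1 - t) ≤ 2 ^ (1 - t) := Real.rpow_le_rpow ha0 ha2 (by linarith)
      have h5 : (2:ℝ) ^ (1 - t) ≤ 2 ^ (1:ℝ) :=
        Real.rpow_le_rpow_of_exponent_le one_le_two (by linarith)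
      rw [Real.rpow_one] at h5
      have hat0 : 0 ≤ a ^ t := Real.rpow_nonneg ha0 t
      calc a = a ^ t * a ^ (1 - t) := this
      _ ≤ a ^ t * 2 := by nlinarith
      _ = 2 * a ^ t := by ring
  -- decomposition
  have hexp2 : Complex.exp (((2 * θ : ℝ) : ℂ) * Complex.I) = e * e := by
    rw [he, ← Complex.exp_add]
    push_cast
    ring_nf
  have hsplit : ‖1 - ((r ^ t : ℝ) : ℂ) * Complex.exp (((2 * θ : ℝ) : ℂ) * Complex.I)‖
      ≤ (1 - r ^ t) + r ^ t * (‖1 + e‖ * ‖1 - e‖) := by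
    have : (1 : ℂ) - ((r ^ t : ℝ) : ℂ) * Complex.exp (((2 * θ : ℝ) : ℂ) * Complex.I)
        = ((1 - r ^ t : ℝ) : ℂ) + ((r ^ t : ℝ) : ℂ) * ((1 + e) * (1 - e)) := by
      rw [hexp2]; push_cast; ring
    rw [this]
    calc ‖_‖ ≤ ‖((1 - r ^ t : ℝ) : ℂ)‖
          + ‖((r ^ t : ℝ) : ℂ) * ((1 + e) * (1 - e))‖ := norm_add_le _ _
    _ = |1 - r ^ t| + |r ^ t| * (‖1 + e‖ * ‖1 - e‖) := by
        rw [norm_mul, norm_mul, Complex.norm_real, Complex.norm_real, Real.norm_eq_abs, Real.norm_eq_abs]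
    _ = (1 - r ^ t) + r ^ t * (‖1 + e‖ * ‖1 - e‖) := by
        rw [abs_of_nonneg (by linarith), abs_of_nonneg hrt0]
  have h1pe : ‖1 + e‖ ≤ 2 := by
    calc ‖1 + e‖ ≤ ‖1‖ + ‖e‖ := norm_add_le _ _
    _ = 2 := by rw [norm_one, heabs]; norm_num
  have h1me : ‖1 - e‖ ≤ 2 * a := by
    have hd : (1 : ℂ) - e = (1 - z) + (z - e) := by ring
    have hze : ‖z - e‖ = 1 - r := by
      have : z - e = ((r - 1 : ℝ) : ℂ) * e := by rw [hz]; push_cast; ring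
      rw [this, norm_mul, heabs, Complex.norm_real, Real.norm_eq_abs, mul_one, abs_of_nonpos (by linarith)]
      ring
    calc ‖1 - e‖ ≤ ‖1 - z‖ + ‖z - e‖ := by
          rw [hd]; exact norm_add_le _ _
    _ = a + (1 - r) := by rw [hze]
    _ ≤ 2 * a := by linarith
  have habs_prod : ‖1 + e‖ * ‖1 - e‖ ≤ 4 * a := by
    have h0 : 0 ≤ ‖1 - e‖ := norm_nonneg _
    nlinarith [norm_nonneg (1 + e)]
  have hat0 : 0 ≤ a ^ t := Real.rpow_nonneg ha0 t
  calc ‖1 - ((r ^ t : ℝ) : ℂ) * Complex.exp (((2 * θ : ℝ) : ℂ) * Complex.I)‖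
      ≤ (1 - r ^ t) + r ^ t * (‖1 + e‖ * ‖1 - e‖) := hsplit
  _ ≤ (1 - r ^ t) + 1 * (4 * a) := by
      have h0 : 0 ≤ ‖1 + e‖ * ‖1 - e‖ := by positivity
      nlinarith
  _ ≤ a ^ t + 4 * (2 * a ^ t) := by nlinarith
  _ = 9 * a ^ t := by ring
end

section
/- Let 0 < σ ≤ 1/2, let r ∈ [1/2, 1] and let θ ∈ ℝ with |θ| ≤ 1. Then |1 − r e^{iθ}|^{2σ} ≥ (1/16)·((1 − r)^{2σ} + 2|θ|^{2σ}). -/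
/-- Eq. (3.20) of the paper: the lower bound
`|1 − r e^{iθ}|^{2σ} ≥ (1/16)((1 − r)^{2σ} + 2|θ|^{2σ})` for `1/2 ≤ r ≤ 1`, `|θ| ≤ 1`. -/
theorem stmt_5 (σ r θ : ℝ) (hσ0 : 0 < σ) (hσ : σ ≤ 1 / 2)
    (hr0 : 1 / 2 ≤ r) (hr1 : r ≤ 1) (hθ : |θ| ≤ 1) :
    (1 / 16) * ((1 - r) ^ (2 * σ) + 2 * |θ| ^ (2 * σ))
      ≤ ‖1 - (r : ℂ) * Complex.exp ((θ : ℂ) * Complex.I)‖ ^ (2 * σ) := by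
  set M : ℝ := ‖1 - (r : ℂ) * Complex.exp ((θ : ℂ) * Complex.I)‖ with hM
  have hM0 : 0 ≤ M := norm_nonneg _
  -- 1 - cos θ ≥ θ²/4
  have hcos : Real.cos θ ≤ 1 - θ ^ 2 / 4 := by
    have h1 := (abs_sub_le_iff.1 (Real.cos_bound hθ)).1
    have h2 : |θ| ^ 4 ≤ |θ| ^ 2 := pow_le_pow_of_le_one (abs_nonneg θ) hθ (by norm_num)
    have h3 : |θ| ^ 2 = θ ^ 2 := sq_abs θ
    nlinarith
  -- |1 - r e^{iθ}|² ≥ (1-r)² + θ²/4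
  have hsq : (1 - r) ^ 2 + θ ^ 2 / 4 ≤ M ^ 2 := by
    have : M ^ 2 = (1 - r * Real.cos θ) ^ 2 + (r * Real.sin θ) ^ 2 := by
      rw [hM, Complex.sq_norm, Complex.normSq_apply]
      simp [Complex.exp_mul_I, Complex.cos_ofReal_re, Complex.sin_ofReal_re]
      ring
    rw [this]
    have hs := Real.sin_sq_add_cos_sq θ
    nlinarith [sq_nonneg (Real.sin θ), sq_nonneg (1 - r)]
  have hA : (0:ℝ) ≤ (1 - r) ^ 2 := sq_nonneg _
  have hB : (0:ℝ) ≤ θ ^ 2 / 4 := by positivity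
  have hAB : (0:ℝ) ≤ (1 - r) ^ 2 + θ ^ 2 / 4 := by linarith
  -- M^(2σ) = (M²)^σ ≥ ((1-r)² + θ²/4)^σ
  have key : ((1 - r) ^ 2 + θ ^ 2 / 4 : ℝ) ^ σ ≤ M ^ (2 * σ) := by
    have : M ^ (2 * σ) = (M ^ 2 : ℝ) ^ σ := by
      rw [← Real.rpow_natCast M 2, ← Real.rpow_mul hM0]
      norm_num
    rw [this]
    exact Real.rpow_le_rpow hAB hsq hσ0.le
  -- (x+y)^σ ≥ (x^σ + y^σ)/2
  have half : ((1 - r) ^ 2 : ℝ) ^ σ / 2 + (θ ^ 2 / 4 : ℝ) ^ σ / 2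
      ≤ ((1 - r) ^ 2 + θ ^ 2 / 4 : ℝ) ^ σ := by
    have h1 : ((1 - r) ^ 2 : ℝ) ^ σ ≤ ((1 - r) ^ 2 + θ ^ 2 / 4 : ℝ) ^ σ :=
      Real.rpow_le_rpow hA (by linarith) hσ0.le
    have h2 : (θ ^ 2 / 4 : ℝ) ^ σ ≤ ((1 - r) ^ 2 + θ ^ 2 / 4 : ℝ) ^ σ :=
      Real.rpow_le_rpow hB (by linarith) hσ0.le
    linarith
  -- rewrite powers
  have e1 : ((1 - r) ^ 2 : ℝ) ^ σ = (1 - r) ^ (2 * σ) := by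
    rw [← Real.rpow_natCast (1 - r) 2, ← Real.rpow_mul (by linarith)]
    norm_num
  have e2 : (θ ^ 2 : ℝ) ^ σ = |θ| ^ (2 * σ) := by
    rw [← sq_abs θ, ← Real.rpow_natCast |θ| 2, ← Real.rpow_mul (abs_nonneg θ)]
    norm_num
  have e3 : (θ ^ 2 / 4 : ℝ) ^ σ ≥ |θ| ^ (2 * σ) / 2 := by
    rw [Real.div_rpow (sq_nonneg θ) (by norm_num), e2]
    have h4 : (4 : ℝ) ^ σ ≤ 2 := by
      calc (4 : ℝ) ^ σ ≤ (4 : ℝ) ^ (1/2 : ℝ) :=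
            Real.rpow_le_rpow_of_exponent_le (by norm_num) hσ
        _ = 2 := by
            rw [show (4:ℝ) = 2 ^ (2:ℕ) by norm_num, ← Real.rpow_natCast 2 2,
              ← Real.rpow_mul (by norm_num)]
            norm_num
    have h5 : (0:ℝ) < (4:ℝ) ^ σ := Real.rpow_pos_of_pos (by norm_num) σ
    have h6 : (0:ℝ) ≤ |θ| ^ (2 * σ) := Real.rpow_nonneg (abs_nonneg θ) _
    rw [ge_iff_le, div_le_div_iff₀ (by norm_num) h5]
    nlinarith
  have h7 : (0:ℝ) ≤ (1 - r) ^ (2 * σ) := Real.rpow_nonneg (by linarith) _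
  have h8 : (0:ℝ) ≤ |θ| ^ (2 * σ) := Real.rpow_nonneg (abs_nonneg θ) _
  calc (1 / 16) * ((1 - r) ^ (2 * σ) + 2 * |θ| ^ (2 * σ))
      ≤ (1 - r) ^ (2 * σ) / 2 + (|θ| ^ (2 * σ) / 2) / 2 := by linarith
    _ ≤ ((1 - r) ^ 2 : ℝ) ^ σ / 2 + (θ ^ 2 / 4 : ℝ) ^ σ / 2 := by
        rw [e1]; linarith
    _ ≤ ((1 - r) ^ 2 + θ ^ 2 / 4 : ℝ) ^ σ := half
    _ ≤ M ^ (2 * σ) := key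
end

section
/- Let α ∈ (1, 2], η ∈ [0, α], τ ∈ (0, 1), and μ₁ > 0. Then for every real μ with |μ| ≥ μ₁, one has (1 + μ²)^{η/2} · |e^{−iτ|μ|^α} − 1| / (τ|μ|^α) ≤ 2^{η/α} · (1 + μ₁^{−2})^{η/2} · τ^{−η/α}. -/
lemma aux_abs (θ : ℝ) : ‖Complex.exp ((θ:ℂ) * Complex.I) - 1‖ ≤ |θ| := by
  have h2 : (‖Complex.exp ((θ:ℂ) * Complex.I) - 1‖)^2 ≤ |θ|^2 := by
    rw [Complex.sq_norm, Complex.exp_mul_I, Complex.normSq_apply, sq_abs]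
    simp only [Complex.add_re, Complex.add_im, Complex.mul_re, Complex.mul_im,
      Complex.sub_re, Complex.sub_im, Complex.cos_ofReal_re, Complex.cos_ofReal_im,
      Complex.sin_ofReal_re, Complex.sin_ofReal_im, Complex.I_re, Complex.I_im,
      Complex.one_re, Complex.one_im]
    have hc : Real.cos θ = Real.cos (θ/2)^2 - Real.sin (θ/2)^2 := by
      rw [← Real.cos_two_mul']; ring_nf
    have hs : Real.sin θ = 2 * Real.sin (θ/2) * Real.cos (θ/2) := by
      rw [← Real.sin_two_mul]; ring_nf
    rw [hc, hs]
    nlinarith [Real.sin_sq_le_sq (x := θ/2), Real.sin_sq_add_cos_sq (θ/2),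
      sq_nonneg (Real.sin (θ/2)), sq_nonneg (Real.cos (θ/2)),
      sq_nonneg (Real.sin (θ/2) * Real.cos (θ/2))]
  exact (pow_le_pow_iff_left₀ (norm_nonneg _) (abs_nonneg θ) two_ne_zero).mp h2

/-- Per-Fourier-mode multiplier estimate underlying Lemma 3.6 of the paper:
`(1 + μ²)^{η/2} |e^{−iτ|μ|^α} − 1| / (τ|μ|^α) ≤ 2^{η/α} (1 + μ₁^{−2})^{η/2} τ^{−η/α}`
for `|μ| ≥ μ₁ > 0`. -/
theorem stmt_7 (α η τ μ₁ μ : ℝ) (hα1 : 1 < α) (hα2 : α ≤ 2)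
    (hη0 : 0 ≤ η) (hηα : η ≤ α) (hτ0 : 0 < τ) (hτ1 : τ < 1)
    (hμ₁ : 0 < μ₁) (hμ : μ₁ ≤ |μ|) :
    (1 + μ ^ 2) ^ (η / 2)
        * ‖Complex.exp (-((τ * |μ| ^ α : ℝ) : ℂ) * Complex.I) - 1‖
        / (τ * |μ| ^ α)
      ≤ 2 ^ (η / α) * (1 + μ₁ ^ (-2 : ℝ)) ^ (η / 2) * τ ^ (-(η / α)) := by
  have hα0 : (0:ℝ) < α := lt_trans one_pos hα1
  have hμ0 : (0:ℝ) < |μ| := lt_of_lt_of_le hμ₁ hμ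
  have hμα : (0:ℝ) < |μ| ^ α := Real.rpow_pos_of_pos hμ0 α
  set x : ℝ := τ * |μ| ^ α with hxdef
  have hx : 0 < x := mul_pos hτ0 hμα
  set s : ℝ := η / α with hsdef
  have hs0 : 0 ≤ s := div_nonneg hη0 hα0.le
  have hs1 : s ≤ 1 := (div_le_one hα0).mpr hηα
  set B := ‖Complex.exp (-((x : ℝ) : ℂ) * Complex.I) - 1‖ with hBdef
  -- B ≤ min 2 x
  have hB2 : B ≤ 2 := by
    have he : ‖Complex.exp (-((x : ℝ) : ℂ) * Complex.I)‖ = 1 := by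
      rw [show -((x : ℝ) : ℂ) * Complex.I = ((-x : ℝ) : ℂ) * Complex.I by push_cast; ring,
        Complex.norm_exp_ofReal_mul_I]
    have ht := norm_sub_le (Complex.exp (-((x : ℝ) : ℂ) * Complex.I)) (1 : ℂ)
    simp only [norm_one, he] at ht
    rw [hBdef]
    linarith
  have hBx : B ≤ x := by
    have := aux_abs (-x)
    rw [abs_neg, abs_of_pos hx] at this
    calc B = ‖Complex.exp (((-x : ℝ) : ℂ) * Complex.I) - 1‖ := by
          rw [hBdef]; congr 3; push_cast; ring
      _ ≤ x := this
  have hBmin : B ≤ min 2 x := le_min hB2 hBx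
  -- min 2 x ≤ 2^s * x^(1-s)
  have hminpos : 0 < min 2 x := lt_min two_pos hx
  have hmin : min 2 x ≤ 2 ^ s * x ^ (1 - s) := by
    have : min 2 x = (min 2 x) ^ s * (min 2 x) ^ (1 - s) := by
      rw [← Real.rpow_add hminpos]; norm_num
    rw [this]
    exact mul_le_mul (Real.rpow_le_rpow hminpos.le (min_le_left _ _) hs0)
      (Real.rpow_le_rpow hminpos.le (min_le_right _ _) (by linarith))
      (Real.rpow_nonneg hminpos.le _) (by positivity)
  -- weight bound
  have hA : (1 + μ ^ 2) ^ (η / 2) ≤ |μ| ^ η * (1 + μ₁ ^ (-2 : ℝ)) ^ (η / 2) := by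
    have hm2 : μ₁ ^ (-2 : ℝ) = (μ₁ ^ 2)⁻¹ := by
      rw [Real.rpow_neg hμ₁.le, show ((2:ℝ)) = ((2:ℕ):ℝ) by norm_num, Real.rpow_natCast]
    have hsq : μ₁ ^ 2 ≤ μ ^ 2 := by nlinarith [sq_abs μ, hμ₁.le]
    have h1 : 1 + μ ^ 2 ≤ μ ^ 2 * (1 + μ₁ ^ (-2 : ℝ)) := by
      rw [hm2]
      have hμ₁2 : (0:ℝ) < μ₁ ^ 2 := by positivity
      rw [mul_add, mul_one]
      have : 1 ≤ μ ^ 2 * (μ₁ ^ 2)⁻¹ := by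
        calc (1:ℝ) = μ₁ ^ 2 * (μ₁ ^ 2)⁻¹ := (mul_inv_cancel₀ (ne_of_gt hμ₁2)).symm
          _ ≤ μ ^ 2 * (μ₁ ^ 2)⁻¹ := by gcongr
      linarith
    calc (1 + μ ^ 2) ^ (η / 2) ≤ (μ ^ 2 * (1 + μ₁ ^ (-2 : ℝ))) ^ (η / 2) :=
          Real.rpow_le_rpow (by positivity) h1 (by positivity)
      _ = (μ ^ 2) ^ (η / 2) * (1 + μ₁ ^ (-2 : ℝ)) ^ (η / 2) :=
          Real.mul_rpow (by positivity) (by positivity)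
      _ = |μ| ^ η * (1 + μ₁ ^ (-2 : ℝ)) ^ (η / 2) := by
          congr 1
          rw [← sq_abs, ← Real.rpow_natCast |μ| 2, ← Real.rpow_mul hμ0.le]
          norm_num
          rw [show (2:ℝ) * (η / 2) = η by ring]
  have hApos : (0:ℝ) ≤ (1 + μ ^ 2) ^ (η / 2) := by positivity
  have hB0 : (0:ℝ) ≤ B := norm_nonneg _
  -- combine
  have key : (1 + μ ^ 2) ^ (η / 2) * B / x
      ≤ (|μ| ^ η * (1 + μ₁ ^ (-2 : ℝ)) ^ (η / 2)) * (2 ^ s * x ^ (1 - s)) / x := by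
    gcongr
    exact hBmin.trans hmin
  refine key.trans (le_of_eq ?_)
  -- equality of the right-hand sides
  have hx1s : x ^ ((1:ℝ) - s) / x = τ ^ (-s) * |μ| ^ (-η) := by
    have h1 : x ^ ((1:ℝ) - s) / x = x ^ (-s) := by
      rw [show (1:ℝ) - s = -s + 1 by ring, Real.rpow_add hx, Real.rpow_one]
      field_simp
    rw [h1, hxdef, Real.mul_rpow hτ0.le hμα.le]
    congr 1
    rw [← Real.rpow_mul hμ0.le]
    congr 1
    rw [hsdef]
    field_simp
  have hμη : |μ| ^ η * |μ| ^ (-η) = 1 := by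
    rw [← Real.rpow_add hμ0]; simp
  calc |μ| ^ η * (1 + μ₁ ^ (-2:ℝ)) ^ (η / 2) * (2 ^ s * x ^ (1 - s)) / x
      = (|μ| ^ η * (1 + μ₁ ^ (-2:ℝ)) ^ (η / 2) * 2 ^ s) * (x ^ ((1:ℝ) - s) / x) := by ring
    _ = (|μ| ^ η * (1 + μ₁ ^ (-2:ℝ)) ^ (η / 2) * 2 ^ s) * (τ ^ (-s) * |μ| ^ (-η)) := by
        rw [hx1s]
    _ = 2 ^ s * (1 + μ₁ ^ (-2:ℝ)) ^ (η / 2) * τ ^ (-s) * (|μ| ^ η * |μ| ^ (-η)) := by ring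
    _ = 2 ^ s * (1 + μ₁ ^ (-2:ℝ)) ^ (η / 2) * τ ^ (-s) := by rw [hμη, mul_one]
end

section
/- Let a < b be real numbers, set μ_l = 2πl/(b − a) for l ∈ ℤ and μ₁ = 2π/(b − a). Let α ∈ (1, 2], η ∈ [0, α], and 0 < τ < 1. Then for every sequence v : ℤ → ℂ with ∑_{l∈ℤ} |v_l|² < ∞, one has ∑_{l∈ℤ} (1 + μ_l²)^η · |φ₁(−iτ|μ_l|^α)|² · |v_l|² ≤ C(η)² · τ^{−2η/α} · ∑_{l∈ℤ} |v_l|², where C(η) = 2^{η/α}(1 + μ₁^{−2})^{η/2}. -/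
/-- The entire function `φ₁(z) = (e^z − 1)/z`, with `φ₁(0) = 1`. -/
noncomputable def phi1 (z : ℂ) : ℂ := if z = 0 then 1 else (Complex.exp z - 1) / z

lemma abs_exp_sub_one_sq (x : ℝ) :
    ‖Complex.exp ((x:ℂ)*Complex.I) - 1‖ ^ 2 = 2 - 2 * Real.cos x := by
  rw [Complex.sq_norm, Complex.normSq_apply]
  simp [Complex.exp_ofReal_mul_I_re, Complex.exp_ofReal_mul_I_im]
  nlinarith [Real.sin_sq_add_cos_sq x]

lemma abs_exp_sub_one_le (x : ℝ) :
    ‖Complex.exp ((x:ℂ)*Complex.I) - 1‖ ≤ |x| := by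
  have h := abs_exp_sub_one_sq x
  have h2 : ‖Complex.exp ((x:ℂ)*Complex.I) - 1‖ ^ 2 ≤ |x| ^ 2 := by
    rw [h, sq_abs]; nlinarith [Real.one_sub_sq_div_two_le_cos (x := x)]
  exact (pow_le_pow_iff_left₀ (norm_nonneg _) (abs_nonneg _) two_ne_zero).mp h2

lemma abs_exp_sub_one_le_two (x : ℝ) :
    ‖Complex.exp ((x:ℂ)*Complex.I) - 1‖ ≤ 2 := by
  have h := abs_exp_sub_one_sq x
  have h2 : ‖Complex.exp ((x:ℂ)*Complex.I) - 1‖ ^ 2 ≤ 2 ^ 2 := by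
    rw [h]; nlinarith [Real.neg_one_le_cos x]
  exact (pow_le_pow_iff_left₀ (norm_nonneg _) (by norm_num) two_ne_zero).mp h2

lemma neg_eq (x : ℝ) : -(x:ℂ)*Complex.I = ((-x:ℝ):ℂ)*Complex.I := by push_cast; ring

lemma abs_phi1_le_one (x : ℝ) : ‖phi1 (-(x:ℂ)*Complex.I)‖ ≤ 1 := by
  rcases eq_or_ne x 0 with h | h
  · simp [phi1, h]
  · have hz : (-(x:ℂ)*Complex.I) ≠ 0 := by simp [Complex.ext_iff, h]
    rw [phi1, if_neg hz, norm_div, div_le_one (norm_pos_iff.mpr hz)]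
    rw [neg_eq]
    have := abs_exp_sub_one_le (-x)
    simpa [abs_neg, Complex.norm_real] using this

lemma abs_phi1_le_div (x : ℝ) (hx : 0 < x) :
    ‖phi1 (-(x:ℂ)*Complex.I)‖ ≤ 2 / x := by
  have hz : (-(x:ℂ)*Complex.I) ≠ 0 := by simp [Complex.ext_iff, hx.ne']
  rw [phi1, if_neg hz, norm_div]
  have habs : ‖-(x:ℂ)*Complex.I‖ = x := by
    simp [abs_of_pos hx]
  rw [habs]
  gcongr
  rw [neg_eq]
  exact abs_exp_sub_one_le_two (-x)

lemma term_bound (L α η τ : ℝ) (hL : 0 < L) (hα1 : 1 < α)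
    (hη0 : 0 ≤ η) (hηα : η ≤ α) (hτ0 : 0 < τ) (m : ℝ) (hm : L ≤ m) :
    (1 + m ^ 2) ^ η * ‖phi1 (-((τ * m ^ α : ℝ) : ℂ) * Complex.I)‖ ^ 2
      ≤ 2 ^ (2 * (η / α)) * (1 + L ^ (-2 : ℝ)) ^ η * τ ^ (-(2 * η / α)) := by
  set θ := η / α with hθ
  have hα0 : (0:ℝ) < α := lt_trans one_pos hα1
  have hθ0 : 0 ≤ θ := div_nonneg hη0 hα0.le
  have hθ1 : θ ≤ 1 := (div_le_one hα0).mpr hηα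
  have hm0 : 0 < m := lt_of_lt_of_le hL hm
  have hx : 0 < τ * m ^ α := by positivity
  -- phi bound
  have hphi : ‖phi1 (-((τ * m ^ α : ℝ) : ℂ) * Complex.I)‖ ^ 2
      ≤ (2 / (τ * m ^ α)) ^ (2 * θ) := by
    rcases le_or_gt (τ * m ^ α) 2 with h | h
    · have h1 : (1:ℝ) ≤ 2 / (τ * m ^ α) := (one_le_div hx).mpr h
      calc ‖phi1 (-((τ * m ^ α : ℝ) : ℂ) * Complex.I)‖ ^ 2 ≤ 1 := by
            nlinarith [abs_phi1_le_one (τ * m ^ α),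
              norm_nonneg (phi1 (-((τ * m ^ α : ℝ) : ℂ) * Complex.I))]
        _ ≤ (2 / (τ * m ^ α)) ^ (2 * θ) := Real.one_le_rpow h1 (by positivity)
    · have h1 : 2 / (τ * m ^ α) ≤ 1 := (div_le_one hx).mpr h.le
      have h2 : ‖phi1 (-((τ * m ^ α : ℝ) : ℂ) * Complex.I)‖ ^ 2
          ≤ (2 / (τ * m ^ α)) ^ (2:ℕ) := by
        have := abs_phi1_le_div (τ * m ^ α) hx
        nlinarith [norm_nonneg (phi1 (-((τ * m ^ α : ℝ) : ℂ) * Complex.I))]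
      calc ‖phi1 (-((τ * m ^ α : ℝ) : ℂ) * Complex.I)‖ ^ 2
          ≤ (2 / (τ * m ^ α)) ^ (2:ℕ) := h2
        _ = (2 / (τ * m ^ α)) ^ ((2:ℕ):ℝ) := (Real.rpow_natCast _ 2).symm
        _ ≤ (2 / (τ * m ^ α)) ^ (2 * θ) := by
            apply Real.rpow_le_rpow_of_exponent_ge (by positivity) h1
            push_cast; nlinarith
  -- weight bound
  have hw : (1 + m ^ 2) ^ η ≤ (1 + L ^ (-2:ℝ)) ^ η * m ^ (2 * η) := by
    have hL2 : L ^ (-2:ℝ) = (L ^ 2)⁻¹ := by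
      rw [Real.rpow_neg hL.le]
      norm_num [Real.rpow_two]
    have hle : 1 + m ^ 2 ≤ (1 + L ^ (-2:ℝ)) * m ^ 2 := by
      rw [hL2]
      have h1 : (1:ℝ) ≤ (L ^ 2)⁻¹ * m ^ 2 := by
        rw [← div_eq_inv_mul, le_div_iff₀ (by positivity)]
        nlinarith
      nlinarith [sq_nonneg m]
    calc (1 + m ^ 2) ^ η ≤ ((1 + L ^ (-2:ℝ)) * m ^ 2) ^ η :=
          Real.rpow_le_rpow (by positivity) hle hη0
      _ = (1 + L ^ (-2:ℝ)) ^ η * (m ^ 2) ^ η :=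
          Real.mul_rpow (by positivity) (by positivity)
      _ = (1 + L ^ (-2:ℝ)) ^ η * m ^ (2 * η) := by
          rw [← Real.rpow_natCast m 2, ← Real.rpow_mul hm0.le]
          push_cast; ring_nf
  -- algebraic identity
  have e1 : (2 / (τ * m ^ α)) ^ (2 * θ)
      = 2 ^ (2 * θ) * τ ^ (-(2 * θ)) * m ^ (-(2 * η)) := by
    rw [Real.div_rpow (by norm_num) hx.le, Real.mul_rpow hτ0.le (by positivity),
      ← Real.rpow_mul hm0.le]
    have hexp : α * (2 * θ) = 2 * η := by
      rw [hθ]; field_simp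
    rw [hexp, Real.rpow_neg hτ0.le, Real.rpow_neg hm0.le]
    field_simp
  have hmm : m ^ (2 * η) * m ^ (-(2 * η)) = 1 := by
    rw [← Real.rpow_add hm0]; simp
  calc (1 + m ^ 2) ^ η * ‖phi1 (-((τ * m ^ α : ℝ) : ℂ) * Complex.I)‖ ^ 2
      ≤ ((1 + L ^ (-2:ℝ)) ^ η * m ^ (2 * η)) * ((2 / (τ * m ^ α)) ^ (2 * θ)) := by
        apply mul_le_mul hw hphi (by positivity) (by positivity)
    _ = 2 ^ (2 * θ) * (1 + L ^ (-2:ℝ)) ^ η * τ ^ (-(2 * θ)) *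
          (m ^ (2 * η) * m ^ (-(2 * η))) := by rw [e1]; ring
    _ = 2 ^ (2 * θ) * (1 + L ^ (-2:ℝ)) ^ η * τ ^ (-(2 * θ)) := by rw [hmm, mul_one]
    _ = 2 ^ (2 * (η / α)) * (1 + L ^ (-2:ℝ)) ^ η * τ ^ (-(2 * η / α)) := by
        rw [hθ, mul_div_assoc]

/-- Lemma 3.6 of the paper (smoothing estimate for `φ₁(iτ⟨∇⟩_α)`), expressed via
Parseval's identity in terms of Fourier coefficients `v_l`, with `μ_l = 2πl/(b−a)`:
`∑_l (1+μ_l²)^η |φ₁(−iτ|μ_l|^α)|² |v_l|² ≤ C(η)² τ^{−2η/α} ∑_l |v_l|²`,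
where `C(η) = 2^{η/α}(1+μ₁^{−2})^{η/2}` and `μ₁ = 2π/(b−a)`. -/
theorem stmt_8 (a b : ℝ) (hab : a < b) (α η τ : ℝ) (hα1 : 1 < α) (hα2 : α ≤ 2)
    (hη0 : 0 ≤ η) (hηα : η ≤ α) (hτ0 : 0 < τ) (hτ1 : τ < 1)
    (v : ℤ → ℂ) (hv : Summable fun l : ℤ => ‖v l‖ ^ 2) :
    (∑' l : ℤ, (1 + (2 * Real.pi * l / (b - a)) ^ 2) ^ η
        * ‖phi1 (-((τ * |2 * Real.pi * l / (b - a)| ^ α : ℝ) : ℂ) * Complex.I)‖ ^ 2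
        * ‖v l‖ ^ 2)
      ≤ (2 ^ (η / α) * (1 + (2 * Real.pi / (b - a)) ^ (-2 : ℝ)) ^ (η / 2)) ^ 2
        * τ ^ (-(2 * η / α)) * ∑' l : ℤ, ‖v l‖ ^ 2 := by
  have hba : 0 < b - a := sub_pos.mpr hab
  set L := 2 * Real.pi / (b - a) with hLdef
  have hL : 0 < L := by rw [hLdef]; positivity
  have hα0 : (0:ℝ) < α := lt_trans one_pos hα1
  set K := (2 ^ (η / α) * (1 + L ^ (-2 : ℝ)) ^ (η / 2)) ^ 2 * τ ^ (-(2 * η / α)) with hK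
  have hC : ((2:ℝ) ^ (η / α) * (1 + L ^ (-2:ℝ)) ^ (η / 2)) ^ 2
      = 2 ^ (2 * (η / α)) * (1 + L ^ (-2:ℝ)) ^ η := by
    rw [mul_pow, ← Real.rpow_natCast ((2:ℝ) ^ (η / α)) 2,
      ← Real.rpow_natCast ((1 + L ^ (-2:ℝ)) ^ (η / 2)) 2,
      ← Real.rpow_mul (by norm_num : (0:ℝ) ≤ 2), ← Real.rpow_mul (by positivity)]
    push_cast
    ring_nf
  have hτK : (1:ℝ) ≤ τ ^ (-(2 * η / α)) := by
    have := Real.rpow_le_rpow_of_exponent_ge hτ0 hτ1.le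
      (show -(2 * η / α) ≤ 0 from neg_nonpos.mpr (by positivity))
    simpa using this
  have hK1 : (1:ℝ) ≤ K := by
    rw [hK, hC]
    have h1 : (1:ℝ) ≤ (2:ℝ) ^ (2 * (η / α)) := Real.one_le_rpow (by norm_num) (by positivity)
    have h2 : (1:ℝ) ≤ (1 + L ^ (-2:ℝ)) ^ η :=
      Real.one_le_rpow (le_add_of_nonneg_right (by positivity)) hη0
    nlinarith
  have hterm : ∀ l : ℤ, (1 + (2 * Real.pi * l / (b - a)) ^ 2) ^ η
        * ‖phi1 (-((τ * |2 * Real.pi * l / (b - a)| ^ α : ℝ) : ℂ) * Complex.I)‖ ^ 2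
        * ‖v l‖ ^ 2 ≤ K * ‖v l‖ ^ 2 := by
    intro l
    have hvl : (0:ℝ) ≤ ‖v l‖ ^ 2 := by positivity
    rcases eq_or_ne l 0 with rfl | hl
    · have h0 : (1 + (2 * Real.pi * ((0:ℤ):ℝ) / (b - a)) ^ 2) ^ η
          * ‖phi1 (-((τ * |2 * Real.pi * ((0:ℤ):ℝ) / (b - a)| ^ α : ℝ) : ℂ)
              * Complex.I)‖ ^ 2 = 1 := by
        simp [phi1, Real.zero_rpow hα0.ne']
      exact mul_le_mul_of_nonneg_right (h0.trans_le hK1) hvl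
    · have h1 : (1:ℝ) ≤ |(l:ℝ)| := by
        rw [← Int.cast_abs]
        exact_mod_cast Int.one_le_abs hl
      have hm : L ≤ |2 * Real.pi * l / (b - a)| := by
        have he : 2 * Real.pi * (l:ℝ) / (b - a) = L * l := by
          rw [hLdef]; ring
        rw [he, abs_mul, abs_of_pos hL]
        nlinarith
      have hb := term_bound L α η τ hL hα1 hη0 hηα hτ0 _ hm
      rw [hK, hC]
      apply mul_le_mul_of_nonneg_right ?_ hvl
      rw [← sq_abs (2 * Real.pi * (l:ℝ) / (b - a))]
      exact hb
  have hS2 : Summable (fun l : ℤ => K * ‖v l‖ ^ 2) := hv.mul_left K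
  have hS1 : Summable (fun l : ℤ => (1 + (2 * Real.pi * l / (b - a)) ^ 2) ^ η
        * ‖phi1 (-((τ * |2 * Real.pi * l / (b - a)| ^ α : ℝ) : ℂ) * Complex.I)‖ ^ 2
        * ‖v l‖ ^ 2) :=
    Summable.of_nonneg_of_le (fun l => by positivity) hterm hS2
  calc (∑' l : ℤ, (1 + (2 * Real.pi * l / (b - a)) ^ 2) ^ η
        * ‖phi1 (-((τ * |2 * Real.pi * l / (b - a)| ^ α : ℝ) : ℂ) * Complex.I)‖ ^ 2
        * ‖v l‖ ^ 2)
      ≤ ∑' l : ℤ, K * ‖v l‖ ^ 2 := Summable.tsum_le_tsum hterm hS1 hS2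
    _ = K * ∑' l : ℤ, ‖v l‖ ^ 2 := tsum_mul_left
end

section
/- Let ω ∈ ℝ, let g : ℝ → ℂ be continuously differentiable, and let t ≥ 0. Then |ω · ∫₀^t e^{−i(t−s)ω} g(s) ds| ≤ |g(t)| + |g(0)| + ∫₀^t |g'(s)| ds. -/
/-- Per-Fourier-mode estimate giving Lemma 3.5 of the paper:
`|ω ∫₀^t e^{−i(t−s)ω} g(s) ds| ≤ |g(t)| + |g(0)| + ∫₀^t |g'(s)| ds`. -/
theorem stmt_10 (ω : ℝ) (g : ℝ → ℂ) (hg : ContDiff ℝ 1 g) (t : ℝ) (ht : 0 ≤ t) :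
    ‖((ω : ℂ)
        * ∫ s in (0:ℝ)..t, Complex.exp (-(((t - s) * ω : ℝ) : ℂ) * Complex.I) * g s)‖
      ≤ ‖g t‖ + ‖g 0‖ + ∫ s in (0:ℝ)..t, ‖deriv g s‖ := by
  set F : ℝ → ℂ := fun s => Complex.exp (-(((t - s) * ω : ℝ) : ℂ) * Complex.I) with hF
  have hFabs : ∀ s : ℝ, ‖F s‖ = 1 := by
    intro s
    have : -(((t - s) * ω : ℝ) : ℂ) * Complex.I = ((-((t - s) * ω) : ℝ) : ℂ) * Complex.I := by
      push_cast; ring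
    rw [hF]; simp only [this, Complex.norm_exp_ofReal_mul_I]
  have hFd : ∀ s : ℝ, HasDerivAt F ((ω : ℂ) * Complex.I * F s) s := by
    intro s
    have h1 : HasDerivAt (fun s : ℝ => -(((t - s) * ω : ℝ) : ℂ) * Complex.I)
        ((ω : ℂ) * Complex.I) s := by
      have heq : (fun s : ℝ => -(((t - s) * ω : ℝ) : ℂ) * Complex.I)
          = fun s : ℝ => ((s : ℂ) - (t : ℂ)) * (ω : ℂ) * Complex.I := by
        funext s; push_cast; ring
      rw [heq]
      have h0 : HasDerivAt (fun s : ℝ => ((s : ℂ))) 1 s :=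
        Complex.ofRealCLM.hasDerivAt
      simpa using ((h0.sub_const (t : ℂ)).mul_const (ω : ℂ)).mul_const Complex.I
    simpa [hF, mul_comm] using h1.cexp
  have hFc : Continuous F := by
    apply Complex.continuous_exp.comp
    exact ((Complex.continuous_ofReal.comp ((continuous_const.sub continuous_id).mul continuous_const)).neg).mul continuous_const
  have hg' : Continuous (deriv g) := hg.continuous_deriv le_rfl
  have hderivAt : ∀ s ∈ Set.uIcc (0:ℝ) t, HasDerivAt g (deriv g s) s := fun s _ =>
    (hg.differentiable one_ne_zero s).hasDerivAt
  have hInt1 : IntervalIntegrable (fun s => (ω : ℂ) * Complex.I * F s) MeasureTheory.volume 0 t :=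
    (continuous_const.mul hFc).intervalIntegrable _ _
  have hInt2 : IntervalIntegrable (deriv g) MeasureTheory.volume 0 t :=
    hg'.intervalIntegrable _ _
  have hIntFg' : IntervalIntegrable (fun s => F s * deriv g s) MeasureTheory.volume 0 t :=
    (hFc.mul hg').intervalIntegrable _ _
  have hIntFg : IntervalIntegrable (fun s => (ω : ℂ) * Complex.I * F s * g s)
      MeasureTheory.volume 0 t :=
    ((continuous_const.mul hFc).mul hg.continuous).intervalIntegrable _ _
  have key : (∫ s in (0:ℝ)..t, (ω : ℂ) * Complex.I * F s * g s + F s * deriv g s)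
      = F t * g t - F 0 * g 0 :=
    intervalIntegral.integral_deriv_mul_eq_sub (fun s _ => hFd s) hderivAt hInt1 hInt2
  have split : (∫ s in (0:ℝ)..t, (ω : ℂ) * Complex.I * F s * g s)
      = F t * g t - F 0 * g 0 - ∫ s in (0:ℝ)..t, F s * deriv g s := by
    rw [eq_sub_iff_add_eq, ← intervalIntegral.integral_add hIntFg hIntFg', key]
  have pull : (∫ s in (0:ℝ)..t, (ω : ℂ) * Complex.I * F s * g s)
      = (ω : ℂ) * Complex.I * ∫ s in (0:ℝ)..t, F s * g s := by
    rw [← intervalIntegral.integral_const_mul]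
    congr 1; funext s; ring
  have main : (ω : ℂ) * (∫ s in (0:ℝ)..t, F s * g s)
      = -Complex.I * (F t * g t - F 0 * g 0 - ∫ s in (0:ℝ)..t, F s * deriv g s) := by
    rw [← split, pull]
    have : -Complex.I * ((ω : ℂ) * Complex.I) = (ω : ℂ) := by
      have := Complex.I_mul_I
      field_simp
      ring_nf
      rw [Complex.I_sq]; ring
    calc (ω : ℂ) * ∫ s in (0:ℝ)..t, F s * g s
        = (-Complex.I * ((ω : ℂ) * Complex.I)) * ∫ s in (0:ℝ)..t, F s * g s := by rw [this]
      _ = -Complex.I * ((ω : ℂ) * Complex.I * ∫ s in (0:ℝ)..t, F s * g s) := by ring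
  rw [main]
  have habs : ‖-Complex.I * (F t * g t - F 0 * g 0
      - ∫ s in (0:ℝ)..t, F s * deriv g s)‖
      = ‖F t * g t - F 0 * g 0 - ∫ s in (0:ℝ)..t, F s * deriv g s‖ := by
    rw [norm_mul]; simp
  rw [habs]
  have hb1 : ‖F t * g t‖ = ‖g t‖ := by
    rw [norm_mul, hFabs]; ring
  have hb2 : ‖F 0 * g 0‖ = ‖g 0‖ := by
    rw [norm_mul, hFabs]; ring
  have hb3 : ‖∫ s in (0:ℝ)..t, F s * deriv g s‖
      ≤ ∫ s in (0:ℝ)..t, ‖deriv g s‖ := by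
    have := intervalIntegral.norm_integral_le_integral_norm
      (f := fun s => F s * deriv g s) (a := (0:ℝ)) (b := t) (μ := MeasureTheory.volume) ht
    refine this.trans_eq ?_
    apply intervalIntegral.integral_congr
    intro s _
    simp [norm_mul, hFabs s]
  calc ‖F t * g t - F 0 * g 0 - ∫ s in (0:ℝ)..t, F s * deriv g s‖
      ≤ ‖F t * g t - F 0 * g 0‖
        + ‖∫ s in (0:ℝ)..t, F s * deriv g s‖ := by
        exact (norm_sub_le _ _).trans le_rfl
    _ ≤ ‖F t * g t‖ + ‖F 0 * g 0‖
        + ‖∫ s in (0:ℝ)..t, F s * deriv g s‖ := by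
        gcongr; exact norm_sub_le _ _
    _ ≤ ‖g t‖ + ‖g 0‖ + ∫ s in (0:ℝ)..t, ‖deriv g s‖ := by
        rw [hb1, hb2]; gcongr
end

section
/- Let L > 0, α ∈ (1, 2], and σ satisfy α/4 < σ ≤ 1/2. Let C_F ≥ 0 and F : ℂ → ℂ be such that |F(z₁) − F(z₂)| ≤ C_F |z₁ − z₂|^{2σ} for all z₁, z₂ ∈ ℂ. Let v : ℝ → ℂ be continuously differentiable and periodic with period 2L. Then ∫_{−L}^{L} ∫_{−L}^{L} |F(v(x + y)) − F(v(y))|² / |x|^{1+α} dx dy ≤ C_F² · (∫_{−L}^{L} |x|^{4σ−α−1} dx) · (∫_{−L}^{L} |v'(y)|^{4σ} dy); in particular, the double integral on the left-hand side is finite. -/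
open MeasureTheory Set
open scoped ENNReal Interval

/-- Jensen/Hölder step: `(∫_{Ι a b} w)^p ≤ |b-a|^{p-1} ∫_{Ι a b} w^p` in `ℝ≥0∞` form. -/
lemma holder_step {p : ℝ} (hp : 1 < p) (w : ℝ → ℝ) (hw : Continuous w)
    (hw0 : ∀ t, 0 ≤ w t) (a b : ℝ) :
    ENNReal.ofReal ((∫ t in Ι a b, w t) ^ p)
      ≤ ENNReal.ofReal (|b - a| ^ (p - 1)) * ∫⁻ t in Ι a b, ENNReal.ofReal (w t ^ p) := by
  have hp0 : (0:ℝ) < p := by linarith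
  have hp1 : p - 1 ≠ 0 := sub_ne_zero.mpr hp.ne'
  set q : ℝ := p / (p - 1) with hq_def
  have hq0 : q ≠ 0 := div_ne_zero (by linarith) hp1
  have hpq : p.HolderConjugate q := by
    refine Real.holderConjugate_iff.mpr ⟨hp, ?_⟩
    rw [hq_def]
    field_simp
    ring
  have hmeas : AEMeasurable (fun t => ENNReal.ofReal (w t))
      (volume.restrict (Ι a b)) :=
    (ENNReal.measurable_ofReal.comp hw.measurable).aemeasurable
  have key := ENNReal.lintegral_mul_le_Lp_mul_Lq (volume.restrict (Ι a b)) hpq hmeas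
    (aemeasurable_const (b := (1:ℝ≥0∞)))
  simp only [Pi.mul_apply, mul_one, one_mul, ENNReal.one_rpow, lintegral_const,
    Measure.restrict_apply MeasurableSet.univ, univ_inter] at key
  have hvol : volume (Ι a b) = ENNReal.ofReal |b - a| := by
    rw [Set.uIoc, Real.volume_Ioc, max_sub_min_eq_abs]
  have hint : IntegrableOn w (Ι a b) volume := by
    rw [Set.uIoc]; exact hw.integrableOn_Ioc
  have hJ : ENNReal.ofReal (∫ t in Ι a b, w t)
      ≤ (∫⁻ t in Ι a b, ENNReal.ofReal (w t) ^ p) ^ (1/p)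
        * (ENNReal.ofReal |b - a|) ^ (1/q) := by
    rw [ofReal_integral_eq_lintegral_ofReal hint
      (Filter.Eventually.of_forall fun t => hw0 t)]
    rw [← hvol]
    exact key
  have h2 := ENNReal.rpow_le_rpow hJ hp0.le
  have hInn : (0:ℝ) ≤ ∫ t in Ι a b, w t := integral_nonneg fun t => hw0 t
  rw [ENNReal.ofReal_rpow_of_nonneg hInn hp0.le] at h2
  refine h2.trans (le_of_eq ?_)
  rw [ENNReal.mul_rpow_of_nonneg _ _ hp0.le, ← ENNReal.rpow_mul, ← ENNReal.rpow_mul]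
  have e1 : 1/p * p = 1 := by field_simp
  have e2 : 1/q * p = p - 1 := by rw [hq_def]; field_simp
  rw [e1, e2, ENNReal.rpow_one,
    ENNReal.ofReal_rpow_of_nonneg (abs_nonneg _) (by linarith : (0:ℝ) ≤ p - 1)]
  rw [mul_comm]
  congr 1
  refine lintegral_congr fun t => ?_
  rw [ENNReal.ofReal_rpow_of_nonneg (hw0 t) hp0.le]

/-- Eq. (3.9) of the paper (central estimate of Lemma 3.2): for `α/4 < σ ≤ 1/2` and
`F` globally `2σ`-Hölder continuous with constant `C_F`, and `v` a `C¹` `2L`-periodic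
function, the Gagliardo-type double integral satisfies
`∫∫ |F(v(x+y)) − F(v(y))|²/|x|^{1+α} dx dy ≤ C_F² (∫|x|^{4σ−α−1} dx)(∫|v'(y)|^{4σ} dy)`;
in particular (the right-hand side being finite) the double integral is finite. -/
theorem stmt_11 (L α σ C_F : ℝ) (hL : 0 < L) (hα1 : 1 < α) (hα2 : α ≤ 2)
    (hσ1 : α / 4 < σ) (hσ2 : σ ≤ 1 / 2) (hCF : 0 ≤ C_F)
    (F : ℂ → ℂ)
    (hF : ∀ z₁ z₂ : ℂ, ‖F z₁ - F z₂‖ ≤ C_F * ‖z₁ - z₂‖ ^ (2 * σ))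
    (v : ℝ → ℂ) (hv : ContDiff ℝ 1 v) (hper : ∀ x : ℝ, v (x + 2 * L) = v x) :
    (∫⁻ y in Set.Icc (-L) L, ∫⁻ x in Set.Icc (-L) L,
        ENNReal.ofReal (‖F (v (x + y)) - F (v y)‖ ^ 2 / |x| ^ (1 + α)))
      ≤ ENNReal.ofReal (C_F ^ 2 * (∫ x in (-L)..L, |x| ^ (4 * σ - α - 1))
          * ∫ y in (-L)..L, ‖deriv v y‖ ^ (4 * σ)) := by
  have hσ0 : 0 < σ := by linarith [hσ1, hα1]
  set p : ℝ := 4 * σ with hp_def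
  have hp1 : 1 < p := by rw [hp_def]; linarith
  have hp0 : (0:ℝ) < p := by linarith
  have hpα : α < p := by rw [hp_def]; linarith
  have hLL : -L ≤ L := by linarith
  have hdv : Differentiable ℝ v := hv.differentiable one_ne_zero
  have hdc : Continuous (deriv v) := hv.continuous_deriv le_rfl
  -- continuity of F
  have hFc : Continuous F := by
    have h2σ : (0:ℝ) ≤ 2 * σ := by linarith
    have : HolderWith ⟨C_F, hCF⟩ ⟨2 * σ, h2σ⟩ F := by
      intro z w
      rw [edist_dist, edist_dist, Complex.dist_eq, Complex.dist_eq]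
      calc ENNReal.ofReal (‖F z - F w‖)
          ≤ ENNReal.ofReal (C_F * ‖z - w‖ ^ (2 * σ)) :=
            ENNReal.ofReal_le_ofReal (hF z w)
        _ = ENNReal.ofReal C_F * ENNReal.ofReal (‖z - w‖) ^ (2*σ) := by
            rw [ENNReal.ofReal_mul hCF,
              ENNReal.ofReal_rpow_of_nonneg (norm_nonneg _) h2σ]
        _ = _ := by
            congr 1
            · exact (ENNReal.ofReal_eq_coe_nnreal hCF)
    exact this.continuous (show 0 < (⟨2 * σ, h2σ⟩ : NNReal) by change (0:ℝ) < 2 * σ; linarith)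
  -- periodicity of the derivative
  have hperd : Function.Periodic (deriv v) (2 * L) := by
    intro t
    have hv2 : (fun s => v (s + 2 * L)) = v := funext hper
    rw [← deriv_comp_add_const v (2 * L) t, hv2]
  -- the function h = |v'|^p and its properties
  set h : ℝ → ℝ := fun t => ‖deriv v t‖ ^ p with hh_def
  have hh_cont : Continuous h :=
    (continuous_norm.comp hdc).rpow_const (fun t => Or.inr hp0.le)
  have hh0 : ∀ t, 0 ≤ h t := fun t => Real.rpow_nonneg (norm_nonneg _) p
  have hh_per : Function.Periodic h (2 * L) := fun t => by
    simp only [hh_def, hperd t]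
  set g : ℝ → ℝ≥0∞ := fun t => ENNReal.ofReal (h t) with hg_def
  have hg_meas : Measurable g := ENNReal.measurable_ofReal.comp hh_cont.measurable
  set I : ℝ≥0∞ := ∫⁻ t in Icc (-L) L, g t with hI_def
  -- converting lintegrals of ofReal ∘ h over Icc to interval integrals
  have conv_h : ∀ s : ℝ, (∫⁻ y in Icc (-L) L, ENNReal.ofReal (h (s + y)))
      = ENNReal.ofReal (∫ y in (-L)..L, h (s + y)) := by
    intro s
    have hcont' : Continuous fun y => h (s + y) :=
      hh_cont.comp (continuous_const.add continuous_id)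
    rw [setLIntegral_congr (Ioc_ae_eq_Icc (α := ℝ) (μ := volume)).symm,
      ← ofReal_integral_eq_lintegral_ofReal hcont'.integrableOn_Ioc
        (Filter.Eventually.of_forall fun y => hh0 _),
      intervalIntegral.integral_of_le hLL]
  -- Fact A : shift invariance
  have factA : ∀ s : ℝ, (∫⁻ y in Icc (-L) L, g (s + y)) = I := by
    intro s
    have h0 := conv_h 0
    simp only [zero_add] at h0
    have hreal : (∫ y in (-L)..L, h (s + y)) = ∫ y in (-L)..L, h y := by
      rw [intervalIntegral.integral_comp_add_left h s]
      have := hh_per.intervalIntegral_add_eq (s + -L) (-L)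
      rw [show s + -L + 2 * L = s + L by ring, show -L + 2 * L = L by ring] at this
      exact this
    calc (∫⁻ y in Icc (-L) L, g (s + y))
        = ENNReal.ofReal (∫ y in (-L)..L, h (s + y)) := conv_h s
      _ = ENNReal.ofReal (∫ y in (-L)..L, h y) := by rw [hreal]
      _ = I := h0.symm
  -- I as a real integral
  have hI_eq : I = ENNReal.ofReal (∫ y in (-L)..L, ‖deriv v y‖ ^ p) := by
    have h0 := conv_h 0
    simp only [zero_add] at h0
    exact h0
  have hInt_nonneg : (0:ℝ) ≤ ∫ y in (-L)..L, ‖deriv v y‖ ^ p :=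
    intervalIntegral.integral_nonneg hLL fun u _ => hh0 u
  -- translation of the uIoc integral
  have hK : ∀ x y : ℝ, (∫⁻ t in Ι y (x + y), g t) = ∫⁻ s in Ι 0 x, g (s + y) := by
    intro x y
    have h1 : (fun s => s + y) ⁻¹' (Ι y (x + y)) = Ι 0 x := by
      ext s
      simp only [mem_preimage, Set.mem_uIoc]
      constructor
      · rintro (⟨h1, h2⟩ | ⟨h1, h2⟩)
        · left; constructor <;> linarith
        · right; constructor <;> linarith
      · rintro (⟨h1, h2⟩ | ⟨h1, h2⟩)
        · left; constructor <;> linarith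
        · right; constructor <;> linarith
    calc (∫⁻ t in Ι y (x + y), g t)
        = ∫⁻ s in (fun s => s + y) ⁻¹' (Ι y (x + y)), g (s + y) :=
          ((measurePreserving_add_right volume y).setLIntegral_comp_preimage_emb
            (MeasurableEquiv.addRight y).measurableEmbedding g _).symm
      _ = ∫⁻ s in Ι 0 x, g (s + y) := by rw [h1]
  -- pointwise estimate
  have hpoint : ∀ x y : ℝ, x ≠ 0 →
      ENNReal.ofReal (‖F (v (x + y)) - F (v y)‖ ^ 2 / |x| ^ (1 + α))
        ≤ ENNReal.ofReal (C_F ^ 2 * |x| ^ (p - α - 2)) * ∫⁻ t in Ι y (x + y), g t := by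
    intro x y hx
    have hx' : (0:ℝ) < |x| := abs_pos.mpr hx
    set d : ℝ := ‖v (x + y) - v y‖ with hd_def
    have hd0 : (0:ℝ) ≤ d := norm_nonneg _
    set D : ℝ := ‖F (v (x + y)) - F (v y)‖ with hD_def
    -- Hölder continuity gives D² ≤ C_F² d^p
    have step1 : D ^ 2 ≤ C_F ^ 2 * d ^ p := by
      have h1 : D ≤ C_F * d ^ (2 * σ) := hF _ _
      have h2 : D ^ 2 ≤ (C_F * d ^ (2 * σ)) ^ 2 :=
        pow_le_pow_left₀ (norm_nonneg _) h1 2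
      refine h2.trans (le_of_eq ?_)
      rw [mul_pow, ← Real.rpow_natCast (d ^ (2 * σ)) 2, ← Real.rpow_mul hd0]
      norm_num
      left
      congr 1
      rw [hp_def]; ring
    -- FTC bound : d ≤ ∫ |v'|
    have hJ : d ≤ ∫ t in Ι y (x + y), ‖deriv v t‖ := by
      have hftc : v (x + y) - v y = ∫ t in y..(x + y), deriv v t :=
        (intervalIntegral.integral_deriv_eq_sub (fun t _ => hdv t)
          (hdc.intervalIntegrable _ _)).symm
      rw [hd_def, hftc]
      calc ‖∫ t in y..(x + y), deriv v t‖
          = ‖∫ t in y..(x + y), deriv v t‖ := rfl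
        _ ≤ ∫ t in Ι y (x + y), ‖deriv v t‖ :=
            intervalIntegral.norm_integral_le_integral_norm_uIoc
        _ = ∫ t in Ι y (x + y), ‖deriv v t‖ := by
            rfl
    -- Jensen/Hölder
    have hJp : ENNReal.ofReal (d ^ p)
        ≤ ENNReal.ofReal (|x| ^ (p - 1)) * ∫⁻ t in Ι y (x + y), g t := by
      have hw : Continuous fun t => ‖deriv v t‖ :=
        continuous_norm.comp hdc
      have := holder_step hp1 (fun t => ‖deriv v t‖) hw
        (fun t => norm_nonneg _) y (x + y)
      rw [show x + y - y = x by ring] at this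
      refine le_trans ?_ this
      exact ENNReal.ofReal_le_ofReal
        (Real.rpow_le_rpow hd0 hJ hp0.le)
    -- assemble
    calc ENNReal.ofReal (D ^ 2 / |x| ^ (1 + α))
        ≤ ENNReal.ofReal ((C_F ^ 2 / |x| ^ (1 + α)) * d ^ p) := by
          refine ENNReal.ofReal_le_ofReal ?_
          rw [div_mul_eq_mul_div, div_le_div_iff_of_pos_right (by positivity)]
          exact step1
      _ = ENNReal.ofReal (C_F ^ 2 / |x| ^ (1 + α)) * ENNReal.ofReal (d ^ p) := by
          rw [ENNReal.ofReal_mul (by positivity)]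
      _ ≤ ENNReal.ofReal (C_F ^ 2 / |x| ^ (1 + α)) *
            (ENNReal.ofReal (|x| ^ (p - 1)) * ∫⁻ t in Ι y (x + y), g t) :=
          mul_le_mul_right hJp _
      _ = ENNReal.ofReal (C_F ^ 2 * |x| ^ (p - α - 2)) * ∫⁻ t in Ι y (x + y), g t := by
          rw [← mul_assoc, ← ENNReal.ofReal_mul (by positivity)]
          congr 2
          have hxe : |x| ^ (p - α - 2) = |x| ^ (p - 1) / |x| ^ (1 + α) := by
            rw [← Real.rpow_sub hx']; congr 1; ring
          rw [hxe]; ring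
  -- measurability of the integrand for Fubini
  have hΦmeas : Measurable fun z : ℝ × ℝ =>
      ENNReal.ofReal (‖F (v (z.2 + z.1)) - F (v z.1)‖ ^ 2 / |z.2| ^ (1 + α)) := by
    have hc1 : Continuous fun z : ℝ × ℝ =>
        ‖F (v (z.2 + z.1)) - F (v z.1)‖ ^ 2 := by
      have : Continuous fun z : ℝ × ℝ => F (v (z.2 + z.1)) - F (v z.1) :=
        ((hFc.comp (hv.continuous.comp (continuous_snd.add continuous_fst))).sub
          (hFc.comp (hv.continuous.comp continuous_fst)))
      exact (continuous_norm.comp this).pow 2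
    have hc2 : Continuous fun z : ℝ × ℝ => |z.2| ^ (1 + α) :=
      (continuous_snd.abs).rpow_const fun z => Or.inr (by linarith)
    exact ENNReal.measurable_ofReal.comp (hc1.measurable.div hc2.measurable)
  -- swap the double integral
  rw [show (∫⁻ y in Set.Icc (-L) L, ∫⁻ x in Set.Icc (-L) L,
      ENNReal.ofReal (‖F (v (x + y)) - F (v y)‖ ^ 2 / |x| ^ (1 + α)))
      = ∫⁻ x in Set.Icc (-L) L, ∫⁻ y in Set.Icc (-L) L,
        ENNReal.ofReal (‖F (v (x + y)) - F (v y)‖ ^ 2 / |x| ^ (1 + α)) from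
    lintegral_lintegral_swap hΦmeas.aemeasurable]
  -- bound the inner integral for a.e. x
  have inner_bd : ∀ x : ℝ, x ≠ 0 →
      (∫⁻ y in Set.Icc (-L) L,
        ENNReal.ofReal (‖F (v (x + y)) - F (v y)‖ ^ 2 / |x| ^ (1 + α)))
      ≤ ENNReal.ofReal (C_F ^ 2) * ENNReal.ofReal (|x| ^ (p - α - 1)) * I := by
    intro x hx
    have hx0 : |x| ≠ 0 := abs_ne_zero.mpr hx
    calc (∫⁻ y in Set.Icc (-L) L,
        ENNReal.ofReal (‖F (v (x + y)) - F (v y)‖ ^ 2 / |x| ^ (1 + α)))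
        ≤ ∫⁻ y in Set.Icc (-L) L,
            ENNReal.ofReal (C_F ^ 2 * |x| ^ (p - α - 2)) * ∫⁻ t in Ι y (x + y), g t :=
          lintegral_mono fun y => hpoint x y hx
      _ = ENNReal.ofReal (C_F ^ 2 * |x| ^ (p - α - 2)) *
            ∫⁻ y in Set.Icc (-L) L, ∫⁻ t in Ι y (x + y), g t :=
          lintegral_const_mul' _ _ ENNReal.ofReal_ne_top
      _ = ENNReal.ofReal (C_F ^ 2 * |x| ^ (p - α - 2)) * (I * ENNReal.ofReal |x|) := by
          congr 1
          have hsw : (∫⁻ y in Set.Icc (-L) L, ∫⁻ s in Ι 0 x, g (s + y))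
              = ∫⁻ s in Ι 0 x, ∫⁻ y in Set.Icc (-L) L, g (s + y) := by
            refine lintegral_lintegral_swap ?_
            exact (hg_meas.comp ((measurable_snd.add measurable_fst))).aemeasurable
          calc (∫⁻ y in Set.Icc (-L) L, ∫⁻ t in Ι y (x + y), g t)
              = ∫⁻ y in Set.Icc (-L) L, ∫⁻ s in Ι 0 x, g (s + y) := by
                refine lintegral_congr fun y => hK x y
            _ = ∫⁻ s in Ι 0 x, ∫⁻ y in Set.Icc (-L) L, g (s + y) := hsw
            _ = ∫⁻ _ in Ι 0 x, I := lintegral_congr fun s => factA s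
            _ = I * volume (Ι 0 x) := by
                rw [lintegral_const, Measure.restrict_apply MeasurableSet.univ, univ_inter]
            _ = I * ENNReal.ofReal |x| := by
                rw [Set.uIoc, Real.volume_Ioc, max_sub_min_eq_abs, sub_zero]
      _ = ENNReal.ofReal (C_F ^ 2) * ENNReal.ofReal (|x| ^ (p - α - 1)) * I := by
          rw [ENNReal.ofReal_mul (by positivity), show p - α - 1 = (p - α - 2) + 1 by ring,
            Real.rpow_add_one hx0, ENNReal.ofReal_mul (by positivity)]
          ring
  -- integrate the bound
  have hae : ∀ᵐ x ∂(volume.restrict (Set.Icc (-L) L)), x ≠ (0:ℝ) := by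
    refine ae_restrict_of_ae ?_
    rw [ae_iff]
    convert Real.volume_singleton (a := 0) using 2
    ext x; simp
  have main_bd : (∫⁻ x in Set.Icc (-L) L, ∫⁻ y in Set.Icc (-L) L,
      ENNReal.ofReal (‖F (v (x + y)) - F (v y)‖ ^ 2 / |x| ^ (1 + α)))
      ≤ ∫⁻ x in Set.Icc (-L) L,
          ENNReal.ofReal (C_F ^ 2) * ENNReal.ofReal (|x| ^ (p - α - 1)) * I := by
    refine lintegral_mono_ae ?_
    filter_upwards [hae] with x hx
    exact inner_bd x hx
  refine main_bd.trans (le_of_eq ?_)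
  -- compute the remaining integral
  have hrpow_int : IntegrableOn (fun x => |x| ^ (p - α - 1)) (Ioc (-L) L) volume := by
    have hr : (-1:ℝ) < p - α - 1 := by linarith
    have h₁ : IntervalIntegrable (fun x : ℝ => x ^ (p - α - 1)) volume 0 L :=
      intervalIntegral.intervalIntegrable_rpow' hr
    have h₂ : IntervalIntegrable (fun x : ℝ => |x| ^ (p - α - 1)) volume 0 L := by
      rw [intervalIntegrable_iff_integrableOn_Ioc_of_le hL.le] at h₁ ⊢
      refine h₁.congr_fun (fun x hx => ?_) measurableSet_Ioc
      rw [abs_of_pos hx.1]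
    have h₃ : IntervalIntegrable (fun x : ℝ => |x| ^ (p - α - 1)) volume (-L) 0 := by
      rw [IntervalIntegrable.iff_comp_neg]
      simp only [abs_neg, neg_neg, neg_zero]
      exact h₂.symm
    rw [← intervalIntegrable_iff_integrableOn_Ioc_of_le hLL]
    exact h₃.trans h₂
  have hA : (∫⁻ x in Set.Icc (-L) L, ENNReal.ofReal (|x| ^ (p - α - 1)))
      = ENNReal.ofReal (∫ x in (-L)..L, |x| ^ (p - α - 1)) := by
    rw [setLIntegral_congr (Ioc_ae_eq_Icc (α := ℝ) (μ := volume)).symm,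
      ← ofReal_integral_eq_lintegral_ofReal hrpow_int
        (Filter.Eventually.of_forall fun x => Real.rpow_nonneg (abs_nonneg _) _),
      intervalIntegral.integral_of_le hLL]
  have hA_nonneg : (0:ℝ) ≤ ∫ x in (-L)..L, |x| ^ (p - α - 1) :=
    intervalIntegral.integral_nonneg hLL fun u _ => Real.rpow_nonneg (abs_nonneg _) _
  calc (∫⁻ x in Set.Icc (-L) L,
        ENNReal.ofReal (C_F ^ 2) * ENNReal.ofReal (|x| ^ (p - α - 1)) * I)
      = ENNReal.ofReal (C_F ^ 2) *
          (∫⁻ x in Set.Icc (-L) L, ENNReal.ofReal (|x| ^ (p - α - 1))) * I := by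
        rw [lintegral_mul_const' _ _ (by rw [hI_eq]; exact ENNReal.ofReal_ne_top),
          lintegral_const_mul' _ _ ENNReal.ofReal_ne_top]
    _ = ENNReal.ofReal (C_F ^ 2 * (∫ x in (-L)..L, |x| ^ (p - α - 1))
          * ∫ y in (-L)..L, ‖deriv v y‖ ^ p) := by
        rw [hA, hI_eq, ← ENNReal.ofReal_mul (by positivity),
          ← ENNReal.ofReal_mul (by positivity)]
    _ = _ := by simp only [hp_def, hh_def]
end
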